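/- arXiv:1404.7536 — 2 statements merged into one kernel-verified Lean document; each statement's English description precedes it below -/
import Mathlib

section
/- Let (λ_n)_{n∈ℕ} be a sequence in [0,1] with Σ_{n∈ℕ} λ_n(1 − λ_n) = ∞, let T: H → H be nonexpansive with Fix T ≠ ∅ and demicompact at 0, let x_0 and (e_n)_{n∈ℕ} be H-valued random variables, and define x_{n+1} = x_n + λ_n(T x_n + e_n − x_n) for every n ∈ ℕ. Assume Σ_{n∈ℕ} λ_n √(E[‖e_n‖² | 𝓧_n]) < ∞ P-a.s. Then (x_n)_{n∈ℕ} converges strongly (in norm) P-almost surely to a (Fix T)-valued random variable. -/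
/-!
Along almost every path the iteration is a deterministic Krasnosel'skiĭ–Mann iteration whose
errors satisfy `∑ λₙ ‖eₙ‖ < ∞`. Indeed, conditional Jensen gives
`E[λₙ ‖eₙ‖ | 𝓧ₙ] ≤ λₙ √(E[‖eₙ‖² | 𝓧ₙ])`, and a nonnegative series converges almost surely wherever
the series of its conditional expectations along a filtration does.

For such a deterministic iteration `‖xₙ - p‖` is quasi-Fejér for every fixed point `p`, hence
convergent, and the one-step estimate `‖z + t(Tz - z) - p‖² ≤ ‖z - p‖² - t(1-t)‖Tz - z‖²` makes
`∑ λₙ(1-λₙ)‖Txₙ - xₙ‖²` finite. The residuals `‖Txₙ - xₙ‖` are quasi-Fejér too, so as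
`∑ λₙ(1-λₙ) = ∞` they tend to `0`. Demicompactness at `0` then gives a norm cluster point `q`,
which is fixed by continuity, and the convergent sequence `‖xₙ - q‖` must tend to `0`.
-/

open MeasureTheory Filter Topology
open scoped RealInnerProductSpace

/-- The σ-algebra σ(x_0, …, x_n) generated by the first n+1 terms of a sequence of
random variables. -/
noncomputable def sigmaFinSeq {Ω H : Type*} [m : MeasurableSpace H]
    (x : ℕ → Ω → H) (n : ℕ) : MeasurableSpace Ω :=
  ⨆ i ∈ Set.Iic n, MeasurableSpace.comap (x i) m

/-- `p` is a weak sequential cluster point of the sequence `u`. -/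
def IsWeakClusterPt {E : Type*} [NormedAddCommGroup E] [InnerProductSpace ℝ E]
    (p : E) (u : ℕ → E) : Prop :=
  ∃ k : ℕ → ℕ, StrictMono k ∧
    ∀ y : E, Filter.Tendsto (fun j => (inner ℝ (u (k j)) y : ℝ)) Filter.atTop
      (nhds (inner ℝ p y : ℝ))

/-- `p` is a strong sequential cluster point of the sequence `u`. -/
def IsStrongClusterPt {E : Type*} [NormedAddCommGroup E] (p : E) (u : ℕ → E) : Prop :=
  ∃ k : ℕ → ℕ, StrictMono k ∧ Filter.Tendsto (fun j => u (k j)) Filter.atTop (nhds p)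

/-- `T` is demicompact at `y`: every bounded sequence `u` with `T (u n) - u n → y`
has a norm-convergent subsequence. -/
def DemicompactAt {E : Type*} [NormedAddCommGroup E] (T : E → E) (y : E) : Prop :=
  ∀ u : ℕ → E, (∃ C : ℝ, ∀ n, ‖u n‖ ≤ C) →
    Filter.Tendsto (fun n => T (u n) - u n) Filter.atTop (nhds y) →
    ∃ p : E, ∃ k : ℕ → ℕ, StrictMono k ∧
      Filter.Tendsto (fun j => u (k j)) Filter.atTop (nhds p)

open scoped ENNReal

open Finset in
theorem exists_tendsto_and_summable_of_succ_le_sub_add {u a δ : ℕ → ℝ} (hu : ∀ n, 0 ≤ u n)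
    (ha : ∀ n, 0 ≤ a n) (hδ : ∀ n, 0 ≤ δ n) (hδs : Summable δ)
    (h : ∀ n, u (n + 1) ≤ u n - a n + δ n) :
    (∃ l, Tendsto u atTop (𝓝 l)) ∧ Summable a := by
  set c : ℕ → ℝ := fun n => u n + ∑ k ∈ range n, a k - ∑ k ∈ range n, δ k
  have hc : Antitone c := antitone_nat_of_succ_le fun n => by
    simp only [c, sum_range_succ]; linarith [h n]
  have hδle : ∀ n, ∑ k ∈ range n, δ k ≤ ∑' k, δ k := fun n => hδs.sum_le_tsum _ fun k _ => hδ k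
  have ha_sum : Summable a := summable_of_sum_range_le (c := u 0 + ∑' k, δ k) ha fun n => by
    have := hc (Nat.zero_le n)
    simp only [c, range_zero, sum_empty] at this
    linarith [hu n, hδle n]
  refine ⟨?_, ha_sum⟩
  have hc_bdd : BddBelow (Set.range c) := ⟨-∑' k, δ k, by
    rintro _ ⟨n, rfl⟩
    linarith [hu n, hδle n, sum_nonneg fun k (_ : k ∈ range n) => ha k]⟩
  refine ⟨(⨅ n, c n) - ∑' k, a k + ∑' k, δ k, ?_⟩
  have := ((tendsto_atTop_ciInf hc hc_bdd).sub ha_sum.hasSum.tendsto_sum_nat).add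
    hδs.hasSum.tendsto_sum_nat
  convert this using 2 with n
  simp only [c]; ring

theorem nonpos_of_tendsto_of_summable_mul {a b : ℕ → ℝ} {β : ℝ} (ha : ∀ n, 0 ≤ a n)
    (hna : ¬ Summable a) (hab : Summable fun n => a n * b n) (hb : Tendsto b atTop (𝓝 β)) :
    β ≤ 0 := by
  by_contra! hβ
  refine hna (.of_norm_bounded_eventually_nat (hab.mul_left (2 / β)) ?_)
  filter_upwards [hb.eventually (eventually_ge_nhds (half_lt_self hβ))] with n hn
  calc ‖a n‖ = 2 / β * (a n * (β / 2)) := by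
        rw [Real.norm_of_nonneg (ha n)]; field_simp
    _ ≤ 2 / β * (a n * b n) := by gcongr; exact ha n

section KrasnoselskiiMannStep

variable {H : Type*} [NormedAddCommGroup H] {T : H → H} {p : H}

theorem norm_apply_sub_fixedPoint_le (hT : LipschitzWith 1 T) (hp : T p = p) (z : H) :
    ‖T z - p‖ ≤ ‖z - p‖ := by
  simpa [hp, dist_eq_norm] using hT.dist_le_mul z p

variable [InnerProductSpace ℝ H]

theorem norm_add_smul_sub_fixedPoint_sq_le (hT : LipschitzWith 1 T) (hp : T p = p) (z : H)
    {t : ℝ} (ht : t ∈ Set.Icc (0 : ℝ) 1) :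
    ‖z + t • (T z - z) - p‖ ^ 2 ≤ ‖z - p‖ ^ 2 - t * (1 - t) * ‖T z - z‖ ^ 2 := by
  have hexpand : ∀ s : ℝ, ‖z + s • (T z - z) - p‖ ^ 2
      = ‖z - p‖ ^ 2 + 2 * s * ⟪z - p, T z - z⟫ + s ^ 2 * ‖T z - z‖ ^ 2 := fun s => by
    rw [show z + s • (T z - z) - p = (z - p) + s • (T z - z) by abel, norm_add_sq_real,
      inner_smul_right, norm_smul, mul_pow, Real.norm_eq_abs, sq_abs]
    ring
  have hfix : ‖z + (1 : ℝ) • (T z - z) - p‖ ≤ ‖z - p‖ := by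
    simpa using norm_apply_sub_fixedPoint_le hT hp z
  have hsq := pow_le_pow_left₀ (norm_nonneg _) hfix 2
  rw [hexpand] at hsq
  rw [hexpand]
  nlinarith [ht.1, ht.2]

theorem norm_add_smul_sub_fixedPoint_le (hT : LipschitzWith 1 T) (hp : T p = p) (z : H)
    {t : ℝ} (ht : t ∈ Set.Icc (0 : ℝ) 1) :
    ‖z + t • (T z - z) - p‖ ≤ ‖z - p‖ := by
  refine pow_le_pow_iff_left₀ (norm_nonneg _) (norm_nonneg _) two_ne_zero |>.mp ?_
  have := mul_nonneg (mul_nonneg ht.1 (sub_nonneg.2 ht.2)) (sq_nonneg ‖T z - z‖)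
  linarith [norm_add_smul_sub_fixedPoint_sq_le hT hp z ht]

namespace KrasnoselskiiMann

variable {lam : ℕ → ℝ} {x e : ℕ → H}

theorem norm_succ_sub_le (hrec : ∀ n, x (n + 1) = x n + lam n • (T (x n) + e n - x n))
    (hlam : ∀ n, lam n ∈ Set.Icc (0 : ℝ) 1) (q : H) (n : ℕ) :
    ‖x (n + 1) - q‖ ≤ ‖x n + lam n • (T (x n) - x n) - q‖ + lam n * ‖e n‖ := by
  rw [hrec n, show x n + lam n • (T (x n) + e n - x n) - q
    = (x n + lam n • (T (x n) - x n) - q) + lam n • e n by module]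
  refine (norm_add_le _ _).trans_eq ?_
  rw [norm_smul, Real.norm_of_nonneg (hlam n).1]

theorem norm_succ_sub_fixedPoint_le (hT : LipschitzWith 1 T)
    (hrec : ∀ n, x (n + 1) = x n + lam n • (T (x n) + e n - x n))
    (hlam : ∀ n, lam n ∈ Set.Icc (0 : ℝ) 1) (hp : T p = p) (n : ℕ) :
    ‖x (n + 1) - p‖ ≤ ‖x n - p‖ + lam n * ‖e n‖ := by
  linarith [norm_succ_sub_le hrec hlam p n, norm_add_smul_sub_fixedPoint_le hT hp (x n) (hlam n)]

theorem norm_apply_succ_sub_succ_le (hT : LipschitzWith 1 T)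
    (hrec : ∀ n, x (n + 1) = x n + lam n • (T (x n) + e n - x n))
    (hlam : ∀ n, lam n ∈ Set.Icc (0 : ℝ) 1) (n : ℕ) :
    ‖T (x (n + 1)) - x (n + 1)‖ ≤ ‖T (x n) - x n‖ + 2 * (lam n * ‖e n‖) := by
  obtain ⟨hl0, hl1⟩ := hlam n
  have hmove : ‖T (x (n + 1)) - T (x n)‖ ≤ lam n * ‖T (x n) - x n‖ + lam n * ‖e n‖ := by
    refine (hT.norm_sub_le _ _).trans ?_
    rw [NNReal.coe_one, one_mul, hrec n, add_sub_cancel_left,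
      show lam n • (T (x n) + e n - x n) = lam n • (T (x n) - x n) + lam n • e n by module]
    refine (norm_add_le _ _).trans_eq ?_
    rw [norm_smul, norm_smul, Real.norm_of_nonneg hl0]
  have hlag : ‖T (x n) - x (n + 1)‖ ≤ (1 - lam n) * ‖T (x n) - x n‖ + lam n * ‖e n‖ := by
    rw [hrec n, show T (x n) - (x n + lam n • (T (x n) + e n - x n))
      = (1 - lam n) • (T (x n) - x n) - lam n • e n by module]
    refine (norm_sub_le _ _).trans_eq ?_
    rw [norm_smul, norm_smul, Real.norm_of_nonneg hl0, Real.norm_of_nonneg (sub_nonneg.2 hl1)]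
  calc ‖T (x (n + 1)) - x (n + 1)‖
      ≤ ‖T (x (n + 1)) - T (x n)‖ + ‖T (x n) - x (n + 1)‖ := norm_sub_le_norm_sub_add_norm_sub _ _ _
    _ ≤ _ := by linarith

theorem exists_tendsto_norm_sub_fixedPoint (hT : LipschitzWith 1 T)
    (hrec : ∀ n, x (n + 1) = x n + lam n • (T (x n) + e n - x n))
    (hlam : ∀ n, lam n ∈ Set.Icc (0 : ℝ) 1) (hp : T p = p)
    (hsum : Summable fun n => lam n * ‖e n‖) :
    ∃ l, Tendsto (fun n => ‖x n - p‖) atTop (𝓝 l) :=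
  (exists_tendsto_and_summable_of_succ_le_sub_add (a := 0) (fun _ => norm_nonneg _)
    (fun _ => le_rfl) (fun n => mul_nonneg (hlam n).1 (norm_nonneg _)) hsum
    fun n => by simpa using norm_succ_sub_fixedPoint_le hT hrec hlam hp n).1

theorem summable_mul_norm_apply_sub_sq (hT : LipschitzWith 1 T)
    (hrec : ∀ n, x (n + 1) = x n + lam n • (T (x n) + e n - x n))
    (hlam : ∀ n, lam n ∈ Set.Icc (0 : ℝ) 1) (hp : T p = p)
    (hsum : Summable fun n => lam n * ‖e n‖) :
    Summable fun n => lam n * (1 - lam n) * ‖T (x n) - x n‖ ^ 2 := by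
  obtain ⟨l, hl⟩ := exists_tendsto_norm_sub_fixedPoint hT hrec hlam hp hsum
  obtain ⟨B, hB⟩ := hl.bddAbove_range
  have hB' : ∀ n, ‖x n - p‖ ≤ B := fun n => hB ⟨n, rfl⟩
  have hB0 : 0 ≤ B := (norm_nonneg _).trans (hB' 0)
  refine (exists_tendsto_and_summable_of_succ_le_sub_add (u := fun n => 2 * B * ‖x n - p‖)
    (δ := fun n => 2 * B * (lam n * ‖e n‖)) (fun n => by positivity)
    (fun n => mul_nonneg (mul_nonneg (hlam n).1 (sub_nonneg.2 (hlam n).2)) (sq_nonneg _))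
    (fun n => mul_nonneg (by positivity) (mul_nonneg (hlam n).1 (norm_nonneg _)))
    (hsum.mul_left _) fun n => ?_).2
  -- with `d = ‖x n - p‖` and `w` the error-free step, `λ(1-λ)‖T (x n) - x n‖² ≤ d² - ‖w - p‖²`
  -- `= (d - ‖w - p‖)(d + ‖w - p‖) ≤ 2B (d - ‖x (n + 1) - p‖ + λ‖e n‖)`
  have hstep_sq := norm_add_smul_sub_fixedPoint_sq_le hT hp (x n) (hlam n)
  have hstep := norm_add_smul_sub_fixedPoint_le hT hp (x n) (hlam n)
  have hsucc := norm_succ_sub_le hrec hlam p n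
  have hfactor := mul_le_mul_of_nonneg_left (add_le_add (hB' n) (hstep.trans (hB' n)))
    (sub_nonneg.2 hstep)
  nlinarith

theorem tendsto_apply_sub_self_zero (hT : LipschitzWith 1 T)
    (hrec : ∀ n, x (n + 1) = x n + lam n • (T (x n) + e n - x n))
    (hlam : ∀ n, lam n ∈ Set.Icc (0 : ℝ) 1) (hlamdiv : ¬ Summable fun n => lam n * (1 - lam n))
    (hp : T p = p) (hsum : Summable fun n => lam n * ‖e n‖) :
    Tendsto (fun n => T (x n) - x n) atTop (𝓝 0) := by
  obtain ⟨ρ, hρ⟩ := (exists_tendsto_and_summable_of_succ_le_sub_add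
    (u := fun n => ‖T (x n) - x n‖) (a := 0)
    (fun _ => norm_nonneg _) (fun _ => le_rfl)
    (fun n => mul_nonneg zero_le_two (mul_nonneg (hlam n).1 (norm_nonneg _))) (hsum.mul_left 2)
    fun n => by simpa using norm_apply_succ_sub_succ_le hT hrec hlam n).1
  have hρ_sq : ρ ^ 2 ≤ 0 := nonpos_of_tendsto_of_summable_mul
    (fun n => mul_nonneg (hlam n).1 (sub_nonneg.2 (hlam n).2)) hlamdiv
    (summable_mul_norm_apply_sub_sq hT hrec hlam hp hsum) (hρ.pow 2)
  rw [pow_eq_zero_iff two_ne_zero |>.mp (le_antisymm hρ_sq (sq_nonneg ρ))] at hρ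
  exact tendsto_zero_iff_norm_tendsto_zero.2 hρ

theorem exists_fixedPoint_tendsto_of_summable (hT : LipschitzWith 1 T)
    (hrec : ∀ n, x (n + 1) = x n + lam n • (T (x n) + e n - x n))
    (hlam : ∀ n, lam n ∈ Set.Icc (0 : ℝ) 1) (hlamdiv : ¬ Summable fun n => lam n * (1 - lam n))
    (hdemi : DemicompactAt T 0) (hp : T p = p) (hsum : Summable fun n => lam n * ‖e n‖) :
    ∃ q, T q = q ∧ Tendsto x atTop (𝓝 q) := by
  have hres := tendsto_apply_sub_self_zero hT hrec hlam hlamdiv hp hsum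
  obtain ⟨l, hl⟩ := exists_tendsto_norm_sub_fixedPoint hT hrec hlam hp hsum
  obtain ⟨B, hB⟩ := hl.bddAbove_range
  obtain ⟨q, k, hk, hxk⟩ := hdemi x ⟨B + ‖p‖, fun n =>
    (norm_le_norm_sub_add (x n) p).trans (add_le_add_left (hB ⟨n, rfl⟩) _)⟩ hres
  have hq : T q = q := sub_eq_zero.1 <| tendsto_nhds_unique
    (((hT.continuous.tendsto q).comp hxk).sub hxk) (hres.comp hk.tendsto_atTop)
  refine ⟨q, hq, ?_⟩
  obtain ⟨l', hl'⟩ := exists_tendsto_norm_sub_fixedPoint hT hrec hlam hq hsum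
  have hl'0 : l' = 0 := tendsto_nhds_unique (hl'.comp hk.tendsto_atTop)
    (tendsto_iff_norm_sub_tendsto_zero.1 hxk)
  exact tendsto_iff_norm_sub_tendsto_zero.2 (hl'0 ▸ hl')

end KrasnoselskiiMann

end KrasnoselskiiMannStep

open Finset in
theorem ENNReal.tsum_ite_sum_range_succ_le (a : ℕ → ℝ≥0∞) (c : ℝ≥0∞) :
    ∑' n, (if ∑ k ∈ range (n + 1), a k ≤ c then a n else 0) ≤ c := by
  refine ENNReal.tsum_le_of_sum_range_le fun N => le_trans ?_ (min_le_right (∑ k ∈ range N, a k) c)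
  induction N with
  | zero => simp
  | succ N ih =>
    rw [sum_range_succ]
    split_ifs with hN
    · have hle : ∑ n ∈ range N, (if ∑ k ∈ range (n + 1), a k ≤ c then a n else 0) + a N
          ≤ ∑ k ∈ range (N + 1), a k := by
        rw [sum_range_succ]; exact add_le_add (ih.trans (min_le_left _ _)) le_rfl
      exact le_min hle (hle.trans hN)
    · rw [add_zero]
      exact ih.trans (min_le_min_right _ (sum_le_sum_of_subset (range_mono N.le_succ)))

section ConditionalBorelCantelli

variable {Ω : Type*} {m0 : MeasurableSpace Ω} {μ : Measure Ω} [IsFiniteMeasure μ]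

open Finset in
/-- Stopping the series before `∑ μ⁻[f n | ℱ n]` exceeds `c` is predictable, so the stopped series
of the `f n` has expectation at most `c`. -/
theorem ae_tsum_lt_top_of_ae_tsum_condLExp_lt_top (ℱ : Filtration ℕ m0) {f : ℕ → Ω → ℝ≥0∞}
    (hf : ∀ n, AEMeasurable (f n) μ) (h : ∀ᵐ ω ∂μ, ∑' n, μ⁻[f n | ℱ n] ω < ∞) :
    ∀ᵐ ω ∂μ, ∑' n, f n ω < ∞ := by
  set g : ℕ → Ω → ℝ≥0∞ := fun n => μ⁻[f n | ℱ n]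
  set S : ℝ≥0∞ → ℕ → Set Ω := fun c n => {ω | ∑ k ∈ range (n + 1), g k ω ≤ c}
  have hS : ∀ c n, MeasurableSet[ℱ n] (S c n) := fun c n =>
    measurableSet_le (Finset.measurable_sum _ fun k hk =>
      (measurable_condLExp _ _ _).mono (ℱ.mono (Nat.lt_succ_iff.1 (mem_range.1 hk))) le_rfl)
      measurable_const
  have hstopped : ∀ c : ℕ, ∀ᵐ ω ∂μ, ∑' n, (S c n).indicator (f n) ω < ∞ := by
    intro c
    refine ae_lt_top' (AEMeasurable.tsum fun n =>
      (hf n).indicator (ℱ.le n _ (hS c n))) (ne_top_of_le_ne_top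
        (ENNReal.mul_ne_top (ENNReal.natCast_ne_top c) (measure_ne_top μ Set.univ)) ?_)
    calc ∫⁻ ω, ∑' n, (S c n).indicator (f n) ω ∂μ
        = ∑' n, ∫⁻ ω in S c n, g n ω ∂μ := by
          rw [lintegral_tsum fun n => (hf n).indicator (ℱ.le n _ (hS c n))]
          congr 1 with n
          rw [lintegral_indicator (ℱ.le n _ (hS c n)), setLIntegral_condLExp (ℱ.le n) _ _ (hS c n)]
      _ = ∫⁻ ω, ∑' n, (S c n).indicator (g n) ω ∂μ := by
          rw [lintegral_tsum fun n => ((measurable_condLExp' _ _ _).indicator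
            (ℱ.le n _ (hS c n))).aemeasurable]
          congr 1 with n
          rw [lintegral_indicator (ℱ.le n _ (hS c n))]
      _ ≤ ∫⁻ _, (c : ℝ≥0∞) ∂μ :=
          lintegral_mono fun ω => by
            simpa only [S, Set.indicator_apply, Set.mem_ofPred_eq]
              using ENNReal.tsum_ite_sum_range_succ_le (g · ω) c
      _ = c * μ Set.univ := lintegral_const _
  filter_upwards [h, ae_all_iff.2 hstopped] with ω hω hstopω
  obtain ⟨c, hc⟩ := ENNReal.exists_nat_gt hω.ne
  convert hstopω c using 3 with n
  exact (Set.indicator_of_mem (show ω ∈ S c n from (ENNReal.sum_le_tsum _).trans hc.le) _).symm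

theorem ae_summable_of_ae_summable_condExp (ℱ : Filtration ℕ m0) {f : ℕ → Ω → ℝ}
    (hf : ∀ n, Integrable (f n) μ) (hf0 : ∀ n, 0 ≤ᵐ[μ] f n)
    (h : ∀ᵐ ω ∂μ, Summable fun n => μ[f n | ℱ n] ω) :
    ∀ᵐ ω ∂μ, Summable fun n => f n ω := by
  have hL : ∀ᵐ ω ∂μ, ∀ n, μ⁻[fun ω => ENNReal.ofReal (f n ω) | ℱ n] ω
      = ENNReal.ofReal (μ[f n | ℱ n] ω) :=
    ae_all_iff.2 fun n => condLExp_ofReal _ (hf n) (hf0 n)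
  have hfin := ae_tsum_lt_top_of_ae_tsum_condLExp_lt_top ℱ
    (fun n => (hf n).aemeasurable.ennreal_ofReal) <| by
      filter_upwards [h, hL] with ω hω hLω
      simpa only [hLω] using hω.tsum_ofReal_lt_top
  filter_upwards [hfin, ae_all_iff.2 hf0] with ω hω hω0
  exact (ENNReal.summable_toReal hω.ne).congr fun n => ENNReal.toReal_ofReal (hω0 n)

theorem integrable_of_integrable_sq {g : Ω → ℝ} (hg : AEStronglyMeasurable g μ)
    (hg2 : Integrable (fun ω => g ω ^ 2) μ) : Integrable g μ :=
  ((memLp_two_iff_integrable_sq hg).2 hg2).integrable one_le_two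

theorem condExp_le_sqrt_condExp_sq {m : MeasurableSpace Ω} (hm : m ≤ m0) {g : Ω → ℝ}
    (hg : AEStronglyMeasurable[m0] g μ) (hg0 : 0 ≤ᵐ[μ] g) (hg2 : Integrable (fun ω => g ω ^ 2) μ) :
    μ[g | m] ≤ᵐ[μ] fun ω => √(μ[fun ω => g ω ^ 2 | m] ω) := by
  have hsqrt : (Real.sqrt ∘ fun ω => g ω ^ 2) =ᵐ[μ] g := hg0.mono fun ω h => Real.sqrt_sq h
  have hjensen := Real.strictConcaveOn_sqrt.concaveOn.condExp_map_le hm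
    Real.continuous_sqrt.continuousOn.upperSemicontinuousOn (ae_of_all _ fun ω => sq_nonneg (g ω))
    isClosed_Ici hg2 ((integrable_of_integrable_sq hg hg2).congr hsqrt.symm)
  filter_upwards [hjensen, condExp_congr_ae (m := m) hsqrt] with ω hω hω'
  rwa [← hω']

theorem ae_summable_mul_of_ae_summable_mul_sqrt_condExp_sq (ℱ : Filtration ℕ m0) {c : ℕ → ℝ}
    (hc : ∀ n, 0 ≤ c n) {g : ℕ → Ω → ℝ} (hg : ∀ n, AEStronglyMeasurable (g n) μ)
    (hg0 : ∀ n, 0 ≤ᵐ[μ] g n) (hg2 : ∀ n, Integrable (fun ω => g n ω ^ 2) μ)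
    (h : ∀ᵐ ω ∂μ, Summable fun n => c n * √(μ[fun ω => g n ω ^ 2 | ℱ n] ω)) :
    ∀ᵐ ω ∂μ, Summable fun n => c n * g n ω := by
  have hcg0 : ∀ n, 0 ≤ᵐ[μ] fun ω => c n * g n ω :=
    fun n => (hg0 n).mono fun ω hω => mul_nonneg (hc n) hω
  refine ae_summable_of_ae_summable_condExp ℱ
    (fun n => (integrable_of_integrable_sq (hg n) (hg2 n)).const_mul _) hcg0 ?_
  filter_upwards [h, ae_all_iff.2 fun n => condExp_smul (μ := μ) (c n) (g n) (ℱ n),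
    ae_all_iff.2 fun n => condExp_le_sqrt_condExp_sq (ℱ.le n) (hg n) (hg0 n) (hg2 n),
    ae_all_iff.2 fun n => condExp_nonneg (m := ℱ n) (hcg0 n)] with ω hω hsmul hjensen h0
  exact hω.of_nonneg_of_le h0 fun n =>
    (hsmul n).trans_le (mul_le_mul_of_nonneg_left (hjensen n) (hc n))

end ConditionalBorelCantelli

noncomputable def sigmaFinSeqFiltration {Ω H : Type*} [mΩ : MeasurableSpace Ω] [MeasurableSpace H]
    {x : ℕ → Ω → H} (hx : ∀ n, Measurable (x n)) : Filtration ℕ mΩ where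
  seq := sigmaFinSeq x
  mono' _ _ hab := biSup_mono fun _ hi => le_trans hi hab
  le' _ := iSup₂_le fun i _ => (hx i).comap_le

theorem krasnoselskii_mann_stochastic_strong_convergence_general
    {H : Type*} [NormedAddCommGroup H] [InnerProductSpace ℝ H]
    [MeasurableSpace H] [BorelSpace H]
    {Ω : Type*} [MeasurableSpace Ω] (P : Measure Ω) [IsProbabilityMeasure P]
    (lam : ℕ → ℝ) (hlam : ∀ n, lam n ∈ Set.Icc (0 : ℝ) 1)
    (hlamdiv : ¬ Summable fun n => lam n * (1 - lam n))
    (T : H → H) (hT : LipschitzWith 1 T) (hFix : (Function.fixedPoints T).Nonempty)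
    (x e : ℕ → Ω → H)
    (hxm : ∀ n, Measurable (x n)) (hem : ∀ n, Measurable (e n))
    (hrec : ∀ n, ∀ ω, x (n + 1) ω = x n ω + lam n • (T (x n ω) + e n ω - x n ω))
    (heint : ∀ n, Integrable (fun ω => ‖e n ω‖ ^ 2) P)
    (hesum : ∀ᵐ ω ∂P, Summable fun n =>
      lam n * Real.sqrt ((P[fun ω' => ‖e n ω'‖ ^ 2 | sigmaFinSeq x n]) ω))
    (hdemi : DemicompactAt T 0) :
    ∃ xlim : Ω → H, Measurable xlim ∧ (∀ᵐ ω ∂P, xlim ω ∈ Function.fixedPoints T) ∧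
      ∀ᵐ ω ∂P, Tendsto (fun n => x n ω) atTop (𝓝 (xlim ω)) := by
  obtain ⟨p, hp⟩ := hFix
  have hsum : ∀ᵐ ω ∂P, Summable fun n => lam n * ‖e n ω‖ :=
    ae_summable_mul_of_ae_summable_mul_sqrt_condExp_sq (sigmaFinSeqFiltration hxm)
      (fun n => (hlam n).1) (fun n => (hem n).norm.aestronglyMeasurable)
      (fun n => ae_of_all _ fun ω => norm_nonneg (e n ω)) heint hesum
  have hconv : ∀ᵐ ω ∂P, ∃ q, T q = q ∧ Tendsto (fun n => x n ω) atTop (𝓝 q) :=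
    hsum.mono fun ω hω =>
      KrasnoselskiiMann.exists_fixedPoint_tendsto_of_summable hT (hrec · ω) hlam hlamdiv hdemi hp hω
  obtain ⟨xlim, hxlim_meas, hxlim⟩ := measurable_limit_of_tendsto_metrizable_ae
    (fun n => (hxm n).aemeasurable) (hconv.mono fun ω ⟨q, _, hq⟩ => ⟨q, hq⟩)
  refine ⟨xlim, hxlim_meas, ?_, hxlim⟩
  filter_upwards [hconv, hxlim] with ω ⟨q, hq, hxq⟩ hxω
  rwa [tendsto_nhds_unique hxω hxq]

theorem krasnoselskii_mann_stochastic_strong_convergence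
    {H : Type*} [NormedAddCommGroup H] [InnerProductSpace ℝ H] [CompleteSpace H]
    [SecondCountableTopology H] [MeasurableSpace H] [BorelSpace H]
    {Ω : Type*} [MeasurableSpace Ω] (P : Measure Ω) [IsProbabilityMeasure P]
    (lam : ℕ → ℝ) (hlam : ∀ n, lam n ∈ Set.Icc (0 : ℝ) 1)
    (hlamdiv : ¬ Summable fun n => lam n * (1 - lam n))
    (T : H → H) (hT : LipschitzWith 1 T) (hFix : (Function.fixedPoints T).Nonempty)
    (x e : ℕ → Ω → H)
    (hxm : ∀ n, Measurable (x n)) (hem : ∀ n, Measurable (e n))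
    (hrec : ∀ n, ∀ ω, x (n + 1) ω = x n ω + lam n • (T (x n ω) + e n ω - x n ω))
    (heint : ∀ n, Integrable (fun ω => ‖e n ω‖ ^ 2) P)
    (hesum : ∀ᵐ ω ∂P, Summable fun n =>
      lam n * Real.sqrt ((P[fun ω' => ‖e n ω'‖ ^ 2 | sigmaFinSeq x n]) ω))
    (hdemi : DemicompactAt T 0) :
    ∃ xlim : Ω → H, Measurable xlim ∧ (∀ᵐ ω ∂P, xlim ω ∈ Function.fixedPoints T) ∧
      ∀ᵐ ω ∂P, Tendsto (fun n => x n ω) atTop (𝓝 (xlim ω)) :=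
  krasnoselskii_mann_stochastic_strong_convergence_general P lam hlam hlamdiv T hT hFix x e hxm hem
    hrec heint hesum hdemi
end

section
/- Let φ: [0,∞) → [0,∞) be strictly increasing and let (ξ_n)_{n∈ℕ} be a bounded sequence in [0,∞) such that the sequence (φ(ξ_n))_{n∈ℕ} converges. Then (ξ_n)_{n∈ℕ} converges. -/
/-! If `ξ` did not converge, its liminf `A` would lie strictly below its limsup `B`. Picking
`A < c < c' < B`, the sequence is frequently below `c` and frequently above `c'`, so the limit of
`φ ∘ ξ` is at most `φ c` and at least `φ c'`, contradicting `φ c < φ c'`. -/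

open Filter Topology

namespace StrictMonoOn

variable {α β ι : Type*} [Preorder β] [TopologicalSpace β]
  [ClosedIicTopology β] [ClosedIciTopology β] {f : α → β} {s : Set α} {l : Filter ι}
  {u : ι → α} {b : β}

theorem not_frequently_lt_and_frequently_gt [Preorder α] (hf : StrictMonoOn f s)
    (hs : s.OrdConnected) (hus : ∀ i, u i ∈ s) (hb : Tendsto (f ∘ u) l (𝓝 b)) {c c' : α} (hcc' : c < c')
    (hlt : ∃ᶠ i in l, u i < c) (hgt : ∃ᶠ i in l, c' < u i) : False := by
  obtain ⟨i, hi⟩ := hlt.exists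
  obtain ⟨j, hj⟩ := hgt.exists
  have hc : c ∈ s := hs.out (hus i) (hus j) ⟨hi.le, hcc'.le.trans hj.le⟩
  have hc' : c' ∈ s := hs.out (hus i) (hus j) ⟨(hi.trans hcc').le, hj.le⟩
  have hb_le : b ≤ f c :=
    le_of_tendsto_of_frequently hb (hlt.mono fun i hi => (hf (hus i) hc hi).le)
  have hle_b : f c' ≤ b :=
    ge_of_tendsto_of_frequently hb (hgt.mono fun i hi => (hf hc' (hus i) hi).le)
  exact (hle_b.trans hb_le).not_gt (hf hc hc' hcc')

variable [ConditionallyCompleteLinearOrder α] [DenselyOrdered α] [l.NeBot]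

theorem limsup_le_liminf (hf : StrictMonoOn f s) (hs : s.OrdConnected) (hus : ∀ i, u i ∈ s)
    (hb : Tendsto (f ∘ u) l (𝓝 b)) (hbdd_above : IsBoundedUnder (· ≤ ·) l u)
    (hbdd_below : IsBoundedUnder (· ≥ ·) l u) : limsup u l ≤ liminf u l := by
  by_contra! hlt : liminf u l < limsup u l
  obtain ⟨c, hAc, hcB⟩ := exists_between hlt
  obtain ⟨c', hcc', hc'B⟩ := exists_between hcB
  exact hf.not_frequently_lt_and_frequently_gt hs hus hb hcc'
    (frequently_lt_of_liminf_lt hbdd_above.isCoboundedUnder_ge hAc)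
    (frequently_lt_of_lt_limsup hbdd_below.isCoboundedUnder_le hc'B)

theorem tendsto_limsup_of_tendsto_comp [TopologicalSpace α] [OrderTopology α]
    (hf : StrictMonoOn f s) (hs : s.OrdConnected) (hus : ∀ i, u i ∈ s)
    (hb : Tendsto (f ∘ u) l (𝓝 b)) (hbdd_above : IsBoundedUnder (· ≤ ·) l u)
    (hbdd_below : IsBoundedUnder (· ≥ ·) l u) : Tendsto u l (𝓝 (limsup u l)) :=
  tendsto_of_liminf_eq_limsup
    ((liminf_le_limsup hbdd_above hbdd_below).antisymm
      (hf.limsup_le_liminf hs hus hb hbdd_above hbdd_below))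
    rfl hbdd_above hbdd_below

end StrictMonoOn

theorem converges_of_strictMonoOn_image_converges_general
    (φ : ℝ → ℝ) (hφmono : StrictMonoOn φ (Set.Ici (0 : ℝ)))
    (ξ : ℕ → ℝ) (hξnonneg : ∀ n, 0 ≤ ξ n) (hξbdd : ∃ C : ℝ, ∀ n, ξ n ≤ C)
    (hconv : ∃ l : ℝ, Tendsto (fun n => φ (ξ n)) atTop (𝓝 l)) :
    ∃ l : ℝ, Tendsto ξ atTop (𝓝 l) := by
  obtain ⟨C, hC⟩ := hξbdd
  obtain ⟨l, hl⟩ := hconv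
  exact ⟨_, hφmono.tendsto_limsup_of_tendsto_comp Set.ordConnected_Ici hξnonneg hl
    (isBoundedUnder_of ⟨C, hC⟩) (isBoundedUnder_of ⟨0, hξnonneg⟩)⟩

theorem converges_of_strictMonoOn_image_converges
    (φ : ℝ → ℝ) (hφmono : StrictMonoOn φ (Set.Ici (0 : ℝ)))
    (hφnonneg : ∀ t, 0 ≤ t → 0 ≤ φ t)
    (ξ : ℕ → ℝ) (hξnonneg : ∀ n, 0 ≤ ξ n) (hξbdd : ∃ C : ℝ, ∀ n, ξ n ≤ C)
    (hconv : ∃ l : ℝ, Tendsto (fun n => φ (ξ n)) atTop (𝓝 l)) :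
    ∃ l : ℝ, Tendsto ξ atTop (𝓝 l) :=
  converges_of_strictMonoOn_image_converges_general φ hφmono ξ hξnonneg hξbdd hconv
end
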